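/- Let Λ be a family of pairwise inequivalent irreps of a compact group G that is Sidon with constant C and is an ε-peak set with constant w for some 0 < ε < 1 and w ≥ 0. Then Λ is peaking: for every 0 < ε' < 1 there is a constant w' (depending only on C, w, ε, ε') such that for every family u = (u_π)_{π∈Λ} with u_π ∈ U(d_π) there is a complex Radon measure μ on G with total variation norm ‖μ‖ ≤ w', with μ̂(π) = u_π for every π ∈ Λ, and with ‖μ̂(ρ)‖ ≤ ε' for every irrep ρ of G not equivalent to a member of Λ. -/

import Mathlib

open MeasureTheory Matrix
open scoped ComplexOrder ENNReal

noncomputable section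

instance matrixMeasurable {m n : Type*} : MeasurableSpace (Matrix m n ℂ) :=
  inferInstanceAs (MeasurableSpace (m → n → ℂ))

/-- A (finite-dimensional, continuous, unitary) irreducible representation of a
topological group `G`. -/
structure Irrep (G : Type) [Group G] [TopologicalSpace G] where
  d : ℕ
  toFun : G →* Matrix.unitaryGroup (Fin d) ℂ
  continuous_toFun : Continuous fun g => ((toFun g : Matrix (Fin d) (Fin d) ℂ))
  irreducible : ∀ V : Submodule ℂ (Fin d → ℂ),
    (∀ (g : G), ∀ v ∈ V, Matrix.mulVec ((toFun g : Matrix (Fin d) (Fin d) ℂ)) v ∈ V) →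
    V = ⊥ ∨ V = ⊤

namespace Irrep

variable {G : Type} [Group G] [TopologicalSpace G]

/-- The matrix realization of an irrep. -/
def mat (ρ : Irrep G) (g : G) : Matrix (Fin ρ.d) (Fin ρ.d) ℂ :=
  (ρ.toFun g : Matrix (Fin ρ.d) (Fin ρ.d) ℂ)

lemma continuous_mat (ρ : Irrep G) : Continuous ρ.mat := ρ.continuous_toFun

/-- Unitary equivalence of the irrep `ρ` with a matrix-valued function `F`
(e.g. the matrix realization of another representation). -/
def EquivMat (ρ : Irrep G) {m : ℕ} (F : G → Matrix (Fin m) (Fin m) ℂ) : Prop :=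
  ∃ (h : ρ.d = m) (U : Matrix (Fin m) (Fin m) ℂ),
    U ∈ Matrix.unitaryGroup (Fin m) ℂ ∧
    ∀ g : G, U * (Matrix.reindex (finCongr h) (finCongr h) (ρ.mat g)) = F g * U

/-- Unitary equivalence of two irreps. -/
def Equiv (ρ₁ ρ₂ : Irrep G) : Prop := ρ₁.EquivMat ρ₂.mat

/-- `ρ` is nontrivial if it is not constantly the identity. -/
def IsNontrivial (ρ : Irrep G) : Prop := ∃ g, ρ.toFun g ≠ 1

end Irrep

/-- A family of pairwise inequivalent irreps. -/
def PairwiseInequiv {G : Type} [Group G] [TopologicalSpace G] {ι : Type}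
    (π : ι → Irrep G) : Prop :=
  ∀ i j, i ≠ j → ¬ (π i).Equiv (π j)

/-- A family of irreps is symmetric if the (entrywise) conjugate of each member is
equivalent to a member of the family. -/
def SymmetricFamily {G : Type} [Group G] [TopologicalSpace G] {ι : Type}
    (π : ι → Irrep G) : Prop :=
  ∀ i, ∃ j, (π j).EquivMat (fun g => ((π i).mat g).map (starRingEnd ℂ))

/-- The operator norm (on `ℓ₂`) of a complex matrix. -/
def opNorm {d : ℕ} (A : Matrix (Fin d) (Fin d) ℂ) : ℝ :=
  ‖LinearMap.toContinuousLinearMap (Matrix.toEuclideanLin A)‖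

/-- `tr|a|`, the trace of `(a* a)^{1/2}`, i.e. the sum of the singular values of `a`. -/
def traceAbs {d : ℕ} (A : Matrix (Fin d) (Fin d) ℂ) : ℝ :=
  (((Matrix.posSemidef_conjTranspose_mul_self A).1.eigenvectorUnitary : Matrix (Fin d) (Fin d) ℂ) *
    Matrix.diagonal (((↑) : ℝ → ℂ) ∘ Real.sqrt ∘
      (Matrix.posSemidef_conjTranspose_mul_self A).1.eigenvalues) *
    (star (Matrix.posSemidef_conjTranspose_mul_self A).1.eigenvectorUnitary :
      Matrix (Fin d) (Fin d) ℂ)).trace.re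

/-- The Fourier coefficient `μ̂(ρ) = ∫ conj (ρ(t)) dμ(t)` of a (positive) measure `μ`. -/
def fourierP {G : Type} [Group G] [TopologicalSpace G] [MeasurableSpace G]
    (μ : Measure G) (ρ : Irrep G) : Matrix (Fin ρ.d) (Fin ρ.d) ℂ :=
  Matrix.of fun i j => ∫ g, star (ρ.mat g i j) ∂μ

/-- The Fourier coefficient `μ̂(ρ)` of a complex Radon measure on a compact group,
the latter being encoded (via the Riesz representation theorem) as a continuous linear
functional on `C(G, ℂ)`; its total variation norm is then the norm of the functional. -/
def fourierL {G : Type} [Group G] [TopologicalSpace G] [CompactSpace G]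
    (μ : C(G, ℂ) →L[ℂ] ℂ) (ρ : Irrep G) : Matrix (Fin ρ.d) (Fin ρ.d) ℂ :=
  Matrix.of fun i j =>
    μ ⟨fun g => star (ρ.mat g i j), continuous_star.comp (ρ.continuous_mat.matrix_elem i j)⟩

/-- The family `Λ = (π i)` is Sidon with constant `C`. -/
def Sidon {G : Type} [Group G] [TopologicalSpace G] {ι : Type}
    (π : ι → Irrep G) (C : ℝ) : Prop :=
  ∀ (s : Finset ι) (a : ∀ i, Matrix (Fin ((π i).d)) (Fin ((π i).d)) ℂ),
    ∑ i ∈ s, ((π i).d : ℝ) * traceAbs (a i) ≤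
      C * ⨆ g : G, ‖∑ i ∈ s, ((π i).d : ℂ) * Matrix.trace ((π i).mat g * a i)‖

/-- The family `Λ = (π i)` is randomly Sidon with constant `C`, with respect to the
Haar probability measure `m𝒢` on `𝒢 = ∏ U(d_i)`. -/
def RandomlySidonWith {G : Type} [Group G] [TopologicalSpace G] {ι : Type}
    (π : ι → Irrep G) (C : ℝ)
    (m𝒢 : Measure (∀ i, Matrix.unitaryGroup (Fin ((π i).d)) ℂ)) : Prop :=
  ∀ (s : Finset ι) (a : ∀ i, Matrix (Fin ((π i).d)) (Fin ((π i).d)) ℂ),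
    ∑ i ∈ s, ((π i).d : ℝ) * traceAbs (a i) ≤
      C * ∫ u, (⨆ g : G,
        ‖∑ i ∈ s, ((π i).d : ℂ) *
          Matrix.trace ((u i : Matrix (Fin ((π i).d)) (Fin ((π i).d)) ℂ) *
            (π i).mat g * a i)‖) ∂m𝒢

section MatrixLemmas
open scoped Matrix.Norms.L2Operator InnerProductSpace

lemma l2_norm_one_le (d : ℕ) : ‖(1 : Matrix (Fin d) (Fin d) ℂ)‖ ≤ 1 := by
  have h : ‖(1 : Matrix (Fin d) (Fin d) ℂ)‖ * ‖(1 : Matrix (Fin d) (Fin d) ℂ)‖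
      = ‖(1 : Matrix (Fin d) (Fin d) ℂ)‖ := by
    rw [← CStarRing.norm_star_mul_self (x := (1 : Matrix (Fin d) (Fin d) ℂ))]; simp
  nlinarith [norm_nonneg (1 : Matrix (Fin d) (Fin d) ℂ)]

lemma l2_norm_unitary {d : ℕ} {U : Matrix (Fin d) (Fin d) ℂ}
    (hU : U ∈ Matrix.unitaryGroup (Fin d) ℂ) : ‖U‖ ≤ 1 := by
  have h : ‖U‖ * ‖U‖ = ‖(1 : Matrix (Fin d) (Fin d) ℂ)‖ := by
    rw [← CStarRing.norm_star_mul_self (x := U), (Matrix.mem_unitaryGroup_iff'.mp hU)]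
  nlinarith [norm_nonneg U, l2_norm_one_le d]

lemma l2_entry_le {d : ℕ} (A : Matrix (Fin d) (Fin d) ℂ) (i j : Fin d) : ‖A i j‖ ≤ ‖A‖ := by
  have h := Matrix.l2_opNorm_mulVec A (EuclideanSpace.single j (1 : ℂ))
  rw [EuclideanSpace.norm_single, norm_one, mul_one] at h
  set y : EuclideanSpace ℂ (Fin d) := (EuclideanSpace.equiv (Fin d) ℂ).symm
    (A *ᵥ (EuclideanSpace.single j (1 : ℂ)))
  have h2 : ‖A i j‖ ≤ ‖y‖ := by
    have : ⟪EuclideanSpace.single i (1 : ℂ), y⟫_ℂ = A i j := by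
      rw [EuclideanSpace.inner_single_left]
      have hy : y i = A i j := by
        show (A *ᵥ (EuclideanSpace.single j (1 : ℂ))) i = A i j
        have : (EuclideanSpace.single j (1 : ℂ) : Fin d → ℂ) = Pi.single j 1 := rfl
        rw [this, Matrix.mulVec_single]; exact mul_one _
      rw [hy]; simp
    calc ‖A i j‖ = ‖⟪EuclideanSpace.single i (1 : ℂ), y⟫_ℂ‖ := by rw [this]
    _ ≤ ‖EuclideanSpace.single i (1:ℂ)‖ * ‖y‖ := norm_inner_le_norm _ _
    _ ≤ ‖y‖ := by rw [EuclideanSpace.norm_single, norm_one, one_mul]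
  exact h2.trans h

lemma norm_trace_mul_le {d : ℕ} (a b : Matrix (Fin d) (Fin d) ℂ) (hb : ‖b‖ ≤ 1) :
    ‖(a * b).trace‖ ≤ traceAbs a := by
  classical
  set hps := Matrix.posSemidef_conjTranspose_mul_self a with hps_def
  set S : Matrix (Fin d) (Fin d) ℂ :=
    ((hps.1.eigenvectorUnitary : Matrix (Fin d) (Fin d) ℂ) *
      Matrix.diagonal (((↑) : ℝ → ℂ) ∘ Real.sqrt ∘ hps.1.eigenvalues) *
      (star hps.1.eigenvectorUnitary : Matrix (Fin d) (Fin d) ℂ)) with hS_def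
  set lam : Fin d → ℝ := Real.sqrt ∘ hps.1.eigenvalues with hlam_def
  have hlam : ∀ i, 0 ≤ lam i := fun i => Real.sqrt_nonneg _
  set V : Matrix (Fin d) (Fin d) ℂ := (hps.1.eigenvectorUnitary : Matrix (Fin d) (Fin d) ℂ)
    with hV_def
  have hV : V ∈ Matrix.unitaryGroup (Fin d) ℂ := hps.1.eigenvectorUnitary.2
  have hVs : star V ∈ Matrix.unitaryGroup (Fin d) ℂ := Unitary.star_mem hV
  have hVV : star V * V = 1 := Matrix.mem_unitaryGroup_iff'.mp hV
  have hVV' : V * star V = 1 := Matrix.mem_unitaryGroup_iff.mp hV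
  set D : Matrix (Fin d) (Fin d) ℂ := Matrix.diagonal ((↑) ∘ lam) with hD_def
  have hspec : S = V * D * star V := rfl
  have hSS : S * S = aᴴ * a := by
    have hA : aᴴ * a = V * Matrix.diagonal (RCLike.ofReal ∘ hps.1.eigenvalues) * star V := by
      have := hps.1.spectral_theorem
      rw [Unitary.conjStarAlgAut_apply] at this
      exact this
    have hDD : D * D = Matrix.diagonal (RCLike.ofReal ∘ hps.1.eigenvalues) := by
      rw [hD_def, Matrix.diagonal_mul_diagonal]
      congr 1
      funext i
      show ((lam i : ℂ)) * (lam i : ℂ) = ((hps.1.eigenvalues i : ℝ) : ℂ)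
      rw [← Complex.ofReal_mul, hlam_def, Function.comp_apply,
        Real.mul_self_sqrt (hps.eigenvalues_nonneg i)]
    rw [hA, hspec]
    simp only [Matrix.mul_assoc]
    rw [← Matrix.mul_assoc (star V) V, hVV, Matrix.one_mul, ← hDD]
    simp only [Matrix.mul_assoc]
  set Dinv : Matrix (Fin d) (Fin d) ℂ :=
    Matrix.diagonal (fun i => if lam i = 0 then 0 else ((lam i : ℂ))⁻¹) with hDinv_def
  set P : Matrix (Fin d) (Fin d) ℂ :=
    Matrix.diagonal (fun i => if lam i = 0 then (0:ℂ) else 1) with hP_def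
  have hDinvD : Dinv * D = P := by
    rw [hDinv_def, hD_def, Matrix.diagonal_mul_diagonal]
    refine congrArg Matrix.diagonal (funext fun i => ?_)
    by_cases h : lam i = 0 <;>
      simp [h, Function.comp, inv_mul_cancel₀, Complex.ofReal_ne_zero]
  have hDDinv : D * Dinv = P := by
    rw [hDinv_def, hD_def, Matrix.diagonal_mul_diagonal]
    refine congrArg Matrix.diagonal (funext fun i => ?_)
    by_cases h : lam i = 0 <;>
      simp [h, Function.comp, mul_inv_cancel₀, Complex.ofReal_ne_zero]
  have hPP : P * P = P := by
    rw [hP_def, Matrix.diagonal_mul_diagonal]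
    refine congrArg Matrix.diagonal (funext fun i => ?_)
    by_cases h : lam i = 0 <;> simp [h]
  have hPH : Pᴴ = P := by
    rw [hP_def, Matrix.diagonal_conjTranspose]
    refine congrArg Matrix.diagonal (funext fun i => ?_)
    by_cases h : lam i = 0 <;> simp [h, Pi.star_apply]
  have hDinvH : Dinvᴴ = Dinv := by
    rw [hDinv_def, Matrix.diagonal_conjTranspose]
    refine congrArg Matrix.diagonal (funext fun i => ?_)
    by_cases h : lam i = 0 <;>
      simp [h, Pi.star_apply, ← Complex.ofReal_inv, Complex.star_def, Complex.conj_ofReal]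
  -- cancellation helpers
  have c1 : ∀ X : Matrix (Fin d) (Fin d) ℂ, star V * (V * X) = X := fun X => by
    rw [← Matrix.mul_assoc, hVV, Matrix.one_mul]
  have e1 : ∀ X : Matrix (Fin d) (Fin d) ℂ, Dinv * (D * X) = P * X := fun X => by
    rw [← Matrix.mul_assoc, hDinvD]
  have e2 : ∀ X : Matrix (Fin d) (Fin d) ℂ, D * (Dinv * X) = P * X := fun X => by
    rw [← Matrix.mul_assoc, hDDinv]
  have e3 : ∀ X : Matrix (Fin d) (Fin d) ℂ, P * (P * X) = P * X := fun X => by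
    rw [← Matrix.mul_assoc, hPP]
  have hD1P : D * (1 - P) = 0 := by
    have h1 : (1 : Matrix (Fin d) (Fin d) ℂ) = Matrix.diagonal (fun _ => (1:ℂ)) :=
      Matrix.diagonal_one.symm
    rw [hP_def, hD_def, h1, Matrix.diagonal_sub, Matrix.diagonal_mul_diagonal]
    have : (fun i => ((↑) ∘ lam : Fin d → ℂ) i * ((1:ℂ) - if lam i = 0 then (0:ℂ) else 1))
        = fun _ => 0 := by
      funext i; by_cases h : lam i = 0 <;> simp [h, Function.comp]
    rw [this, Matrix.diagonal_zero]
  have e4 : ∀ X : Matrix (Fin d) (Fin d) ℂ, D * ((1 - P) * X) = 0 := fun X => by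
    rw [← Matrix.mul_assoc, hD1P, Matrix.zero_mul]
  -- a absorbs the projection V * (P * star V)
  have haP : a * (V * (P * star V)) = a := by
    set Q : Matrix (Fin d) (Fin d) ℂ := V * ((1 - P) * star V) with hQ_def
    have hSQ : S * Q = 0 := by
      rw [hspec, hQ_def]
      simp only [Matrix.mul_assoc]
      rw [c1, e4, Matrix.mul_zero]
    have haQ : a * Q = 0 := by
      have : (a * Q)ᴴ * (a * Q) = 0 := by
        rw [Matrix.conjTranspose_mul]
        calc Qᴴ * aᴴ * (a * Q) = Qᴴ * (aᴴ * a * Q) := by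
              simp only [Matrix.mul_assoc]
        _ = Qᴴ * (S * (S * Q)) := by rw [← hSS]; simp only [Matrix.mul_assoc]
        _ = 0 := by rw [hSQ, Matrix.mul_zero, Matrix.mul_zero]
      exact Matrix.conjTranspose_mul_self_eq_zero.mp this
    have hsplit : V * (P * star V) = V * star V - Q := by
      rw [hQ_def, Matrix.sub_mul, Matrix.one_mul, Matrix.mul_sub]
      abel
    rw [hsplit, Matrix.mul_sub, haQ, sub_zero, hVV', Matrix.mul_one]
  set w : Matrix (Fin d) (Fin d) ℂ := a * (V * (Dinv * star V)) with hw_def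
  have hwS : w * S = a := by
    rw [hw_def, hspec]
    simp only [Matrix.mul_assoc]
    rw [c1, e1]
    exact haP
  have hwHw : wᴴ * w = V * (P * star V) := by
    have hXH : (V * (Dinv * star V))ᴴ = V * (Dinv * star V) := by
      simp only [Matrix.star_eq_conjTranspose, Matrix.conjTranspose_mul,
        Matrix.conjTranspose_conjTranspose, hDinvH]
      simp only [Matrix.mul_assoc]
    rw [hw_def, Matrix.conjTranspose_mul, hXH]
    have haa : aᴴ * a = V * (D * (D * star V)) := by
      rw [← hSS, hspec]; simp only [Matrix.mul_assoc]; rw [c1]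
    have haa' : ∀ Y : Matrix (Fin d) (Fin d) ℂ,
        aᴴ * (a * Y) = V * (D * (D * (star V * Y))) := fun Y => by
      rw [← Matrix.mul_assoc, haa]; simp only [Matrix.mul_assoc]
    simp only [Matrix.mul_assoc]
    rw [haa', c1, c1, e1, e2, e3]
  have hP1 : ‖P‖ ≤ 1 := by
    have h : ‖P‖ * ‖P‖ = ‖P‖ := by
      rw [← CStarRing.norm_star_mul_self (x := P), Matrix.star_eq_conjTranspose, hPH, hPP]
    nlinarith [norm_nonneg P]
  have hVn : ‖V‖ ≤ 1 := l2_norm_unitary hV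
  have hVsn : ‖star V‖ ≤ 1 := l2_norm_unitary hVs
  have hwn : ‖w‖ ≤ 1 := by
    have h : ‖w‖ * ‖w‖ ≤ 1 := by
      rw [← CStarRing.norm_star_mul_self (x := w), Matrix.star_eq_conjTranspose, hwHw]
      calc ‖V * (P * star V)‖ ≤ ‖V‖ * ‖P * star V‖ := Matrix.l2_opNorm_mul _ _
      _ ≤ ‖V‖ * (‖P‖ * ‖star V‖) := by
            have := Matrix.l2_opNorm_mul P (star V)
            nlinarith [norm_nonneg V]
      _ ≤ 1 := by
            have h1 : ‖P‖ * ‖star V‖ ≤ 1 := by nlinarith [norm_nonneg P, norm_nonneg (star V)]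
            nlinarith [norm_nonneg V, mul_nonneg (norm_nonneg P) (norm_nonneg (star V))]
    nlinarith [norm_nonneg w]
  set M : Matrix (Fin d) (Fin d) ℂ := star V * (b * w) * V with hM_def
  have hbw : ‖b * w‖ ≤ 1 := by
    have := Matrix.l2_opNorm_mul b w; nlinarith [norm_nonneg b, norm_nonneg w]
  have hsbw : ‖star V * (b * w)‖ ≤ 1 := by
    have := Matrix.l2_opNorm_mul (star V) (b * w)
    nlinarith [norm_nonneg (star V), norm_nonneg (b * w)]
  have hMn : ‖M‖ ≤ 1 := by
    have := Matrix.l2_opNorm_mul (star V * (b * w)) V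
    nlinarith [norm_nonneg (star V * (b * w)), norm_nonneg V]
  have htr : (a * b).trace = (D * M).trace := by
    conv_lhs => rw [← hwS]
    rw [Matrix.mul_assoc, Matrix.trace_mul_comm, Matrix.mul_assoc, hspec]
    simp only [Matrix.mul_assoc]
    rw [Matrix.trace_mul_comm, hM_def]
    simp only [Matrix.mul_assoc]
  have htr2 : (D * M).trace = ∑ i, (lam i : ℂ) * M i i := by
    simp [Matrix.trace, Matrix.diag, hD_def, Matrix.diagonal_mul, Function.comp]
  have htrS : traceAbs a = ∑ i, lam i := by
    have h1 : S.trace = D.trace := by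
      rw [hspec, Matrix.trace_mul_comm, ← Matrix.mul_assoc, hVV, Matrix.one_mul]
    have h2 : traceAbs a = S.trace.re := rfl
    rw [h2, h1, hD_def, Matrix.trace_diagonal, Complex.re_sum]
    exact Finset.sum_congr rfl fun i _ => by simp [Function.comp]
  rw [htr, htr2]
  calc ‖∑ i, (lam i : ℂ) * M i i‖ ≤ ∑ i, ‖(lam i : ℂ) * M i i‖ := norm_sum_le _ _
  _ ≤ ∑ i, lam i := by
      refine Finset.sum_le_sum fun i _ => ?_
      have h1 : ‖(lam i : ℂ)‖ = lam i := by
        rw [Complex.norm_real]; exact abs_of_nonneg (hlam i)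
      have h2 : ‖M i i‖ ≤ 1 := (l2_entry_le M i i).trans hMn
      rw [norm_mul, h1]
      exact mul_le_of_le_one_right (hlam i) h2
  _ = traceAbs a := htrS.symm




lemma opNorm_eq_l2 {d : ℕ} (A : Matrix (Fin d) (Fin d) ℂ) : opNorm A = ‖A‖ := rfl

lemma map_star_mem_unitary {d : ℕ} {U : Matrix (Fin d) (Fin d) ℂ}
    (hU : U ∈ Matrix.unitaryGroup (Fin d) ℂ) :
    U.map (starRingEnd ℂ) ∈ Matrix.unitaryGroup (Fin d) ℂ := by
  rw [Matrix.mem_unitaryGroup_iff']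
  have h1 : star (U.map (starRingEnd ℂ)) = Uᵀ := by
    ext i j
    simp [Matrix.star_eq_conjTranspose, Matrix.conjTranspose_apply, Matrix.map_apply]
  rw [h1]
  have h2 : star U * U = 1 := Matrix.mem_unitaryGroup_iff'.mp hU
  have h3 := congrArg Matrix.transpose h2
  rw [Matrix.transpose_mul, Matrix.transpose_one] at h3
  have h4 : (star U)ᵀ = U.map (starRingEnd ℂ) := by
    ext i j
    simp [Matrix.star_eq_conjTranspose, Matrix.conjTranspose_apply, Matrix.transpose_apply,
      Matrix.map_apply]
  rwa [h4] at h3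

lemma l2_norm_mulVec_unitary_le {d : ℕ} {U : Matrix (Fin d) (Fin d) ℂ}
    (hU : U ∈ Matrix.unitaryGroup (Fin d) ℂ) (x : EuclideanSpace ℂ (Fin d)) :
    ‖(EuclideanSpace.equiv (Fin d) ℂ).symm (U *ᵥ x)‖ ≤ ‖x‖ := by
  refine (Matrix.l2_opNorm_mulVec U x).trans ?_
  have := l2_norm_unitary hU
  nlinarith [norm_nonneg x, norm_nonneg U]

lemma opNorm_unitary_le {d : ℕ} {U : Matrix (Fin d) (Fin d) ℂ}
    (hU : U ∈ Matrix.unitaryGroup (Fin d) ℂ) : opNorm U ≤ 1 := by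
  rw [opNorm_eq_l2]; exact l2_norm_unitary hU

lemma opNorm_mul_le {d : ℕ} (A B : Matrix (Fin d) (Fin d) ℂ) :
    opNorm (A * B) ≤ opNorm A * opNorm B := by
  rw [opNorm_eq_l2, opNorm_eq_l2, opNorm_eq_l2]; exact Matrix.l2_opNorm_mul A B

lemma opNorm_nonneg {d : ℕ} (A : Matrix (Fin d) (Fin d) ℂ) : 0 ≤ opNorm A :=
  norm_nonneg _

end MatrixLemmas


section FunctionalLayer
open scoped Matrix.Norms.L2Operator InnerProductSpace

variable {G : Type} [Group G] [TopologicalSpace G] [CompactSpace G]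

lemma Irrep.mat_mul (ρ : Irrep G) (g h : G) : ρ.mat (g * h) = ρ.mat g * ρ.mat h := by
  unfold Irrep.mat; rw [_root_.map_mul]; rfl

lemma Irrep.mat_mem (ρ : Irrep G) (g : G) : ρ.mat g ∈ Matrix.unitaryGroup (Fin ρ.d) ℂ :=
  (ρ.toFun g).2

/-- The continuous map `g ↦ conj (ρ(g)_{jk})`. -/
def entryCM (ρ : Irrep G) (j k : Fin ρ.d) : C(G, ℂ) :=
  ⟨fun g => star (ρ.mat g j k), continuous_star.comp (ρ.continuous_mat.matrix_elem j k)⟩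

lemma fourierL_apply (μ : C(G,ℂ) →L[ℂ] ℂ) (ρ : Irrep G) (j k : Fin ρ.d) :
    fourierL μ ρ j k = μ (entryCM ρ j k) := rfl

lemma opNorm_fourierL_le (μ : C(G,ℂ) →L[ℂ] ℂ) (ρ : Irrep G) :
    opNorm (fourierL μ ρ) ≤ ‖μ‖ := by
  classical
  rw [opNorm_eq_l2, Matrix.l2_opNorm_def]
  refine ContinuousLinearMap.opNorm_le_bound _ (norm_nonneg μ) fun x => ?_
  set A := fourierL μ ρ with hA
  show ‖(EuclideanSpace.equiv (Fin ρ.d) ℂ).symm (A *ᵥ x)‖ ≤ ‖μ‖ * ‖x‖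
  set y : EuclideanSpace ℂ (Fin ρ.d) := (EuclideanSpace.equiv (Fin ρ.d) ℂ).symm (A *ᵥ x)
    with hy
  set F : C(G, ℂ) :=
    ∑ j : Fin ρ.d, ∑ k : Fin ρ.d, (starRingEnd ℂ (y j) * x k) • entryCM ρ j k with hF
  have hμF : μ F = (‖y‖ : ℂ)^2 := by
    have h1 : μ F = ∑ j : Fin ρ.d, starRingEnd ℂ (y j) * y j := by
      rw [hF]
      simp only [map_sum, _root_.map_smul, smul_eq_mul]
      refine Finset.sum_congr rfl fun j _ => ?_
      have hyj : y j = ∑ k, A j k * x k := by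
        show (A *ᵥ (x : Fin ρ.d → ℂ)) j = _
        simp [Matrix.mulVec, dotProduct]
      rw [hyj, Finset.mul_sum]
      refine Finset.sum_congr rfl fun k _ => ?_
      rw [← fourierL_apply]
      ring
    rw [h1]
    have h3 : (∑ j, (starRingEnd ℂ) (y j) * y j) = ⟪y, y⟫_ℂ := by
      rw [PiLp.inner_apply]
      refine Finset.sum_congr rfl fun j _ => ?_
      rw [RCLike.inner_apply]; exact mul_comm _ _
    rw [h3, inner_self_eq_norm_sq_to_K]
    norm_cast
  have hFb : ‖F‖ ≤ ‖y‖ * ‖x‖ := by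
    refine (ContinuousMap.norm_le _ (mul_nonneg (norm_nonneg y) (norm_nonneg x))).mpr fun g => ?_
    set z : EuclideanSpace ℂ (Fin ρ.d) := (EuclideanSpace.equiv (Fin ρ.d) ℂ).symm
      (((ρ.mat g).map (starRingEnd ℂ)) *ᵥ x) with hz
    have hFg : F g = ⟪y, z⟫_ℂ := by
      rw [hF]
      simp only [ContinuousMap.coe_sum, Finset.sum_apply, ContinuousMap.coe_smul, Pi.smul_apply,
        smul_eq_mul]
      rw [PiLp.inner_apply]
      refine Finset.sum_congr rfl fun j _ => ?_
      have hzj : z j = ∑ k, star (ρ.mat g j k) * x k := by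
        show (((ρ.mat g).map (starRingEnd ℂ)) *ᵥ (x : Fin ρ.d → ℂ)) j = _
        simp [Matrix.mulVec, dotProduct, Matrix.map_apply]
      rw [RCLike.inner_apply, hzj, Finset.sum_mul]
      refine Finset.sum_congr rfl fun k _ => ?_
      simp only [entryCM, ContinuousMap.coe_mk]
      ring
    rw [hFg]
    refine (norm_inner_le_norm _ _).trans ?_
    have hzn : ‖z‖ ≤ ‖x‖ := l2_norm_mulVec_unitary_le (map_star_mem_unitary (ρ.mat_mem g)) x
    nlinarith [norm_nonneg y]
  have key : ‖y‖ * ‖y‖ ≤ ‖μ‖ * (‖y‖ * ‖x‖) := by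
    have h2 : ‖y‖ * ‖y‖ = ‖((‖y‖ : ℂ))^2‖ := by
      have h4 : ‖((‖y‖ : ℂ))‖ = ‖y‖ := by
        simp [abs_of_nonneg (norm_nonneg y)]
      rw [norm_pow, h4, sq]
    rw [h2, ← hμF]
    refine (μ.le_opNorm F).trans ?_
    exact mul_le_mul_of_nonneg_left hFb (norm_nonneg μ)
  by_cases hy0 : ‖y‖ = 0
  · rw [hy0]; positivity
  · have hy1 : 0 < ‖y‖ := lt_of_le_of_ne (norm_nonneg y) (Ne.symm hy0)
    nlinarith

/-- The conjugate functional `f ↦ conj (μ (conj f))`. -/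
def conjCLM (μ : C(G,ℂ) →L[ℂ] ℂ) : C(G,ℂ) →L[ℂ] ℂ :=
  LinearMap.mkContinuous
    { toFun := fun f => star (μ (star f))
      map_add' := fun f f' => by
        show star (μ (star (f + f'))) = star (μ (star f)) + star (μ (star f'))
        rw [star_add, map_add, star_add]
      map_smul' := fun c f => by
        show star (μ (star (c • f))) = (RingHom.id ℂ) c • star (μ (star f))
        rw [star_smul, _root_.map_smul, star_smul, star_star, RingHom.id_apply, smul_eq_mul] }
    ‖μ‖ (fun f => by
      simp only [LinearMap.coe_mk, AddHom.coe_mk, norm_star]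
      calc ‖μ (star f)‖ ≤ ‖μ‖ * ‖star f‖ := μ.le_opNorm _
      _ = ‖μ‖ * ‖f‖ := by rw [norm_star])

lemma conjCLM_apply (μ : C(G,ℂ) →L[ℂ] ℂ) (f : C(G,ℂ)) :
    conjCLM μ f = star (μ (star f)) := rfl

lemma norm_conjCLM_le (μ : C(G,ℂ) →L[ℂ] ℂ) : ‖conjCLM μ‖ ≤ ‖μ‖ :=
  LinearMap.mkContinuous_norm_le _ (norm_nonneg μ) _

variable [IsTopologicalGroup G]

/-- Auxiliary map for convolution: `g ↦ ν (h ↦ f (g h))`. -/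
def convAux (ν : C(G,ℂ) →L[ℂ] ℂ) (f : C(G,ℂ)) : C(G,ℂ) :=
  ⟨fun g => ν ((f.comp ⟨fun p : G × G => p.1 * p.2, continuous_mul⟩).curry g),
    ν.continuous.comp ((f.comp ⟨fun p : G × G => p.1 * p.2, continuous_mul⟩).curry).continuous⟩

lemma convAux_apply (ν : C(G,ℂ) →L[ℂ] ℂ) (f : C(G,ℂ)) (g : G) :
    convAux ν f g = ν ((f.comp ⟨fun p : G × G => p.1 * p.2, continuous_mul⟩).curry g) := rfl

lemma curry_comp_apply (f : C(G,ℂ)) (g : G) :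
    ((f.comp ⟨fun p : G × G => p.1 * p.2, continuous_mul⟩).curry g)
      = ⟨fun h => f (g * h), f.continuous.comp (continuous_mul_left g)⟩ := by
  ext h; rfl

lemma norm_convAux_le (ν : C(G,ℂ) →L[ℂ] ℂ) (f : C(G,ℂ)) : ‖convAux ν f‖ ≤ ‖ν‖ * ‖f‖ := by
  refine (ContinuousMap.norm_le _ (mul_nonneg (norm_nonneg ν) (norm_nonneg f))).mpr fun g => ?_
  rw [convAux_apply]
  refine (ν.le_opNorm _).trans ?_
  refine mul_le_mul_of_nonneg_left ?_ (norm_nonneg ν)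
  refine (ContinuousMap.norm_le _ (norm_nonneg f)).mpr fun h => ?_
  exact f.norm_coe_le_norm _

/-- Convolution of two complex Radon measures (as functionals). -/
def convCLM (μ ν : C(G,ℂ) →L[ℂ] ℂ) : C(G,ℂ) →L[ℂ] ℂ :=
  LinearMap.mkContinuous
    { toFun := fun f => μ (convAux ν f)
      map_add' := fun f f' => by
        show μ (convAux ν (f + f')) = μ (convAux ν f) + μ (convAux ν f')
        have h : convAux ν (f + f') = convAux ν f + convAux ν f' := by
          ext g
          have hc : (((f + f').comp ⟨fun p : G × G => p.1 * p.2, continuous_mul⟩).curry g)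
              = ((f.comp ⟨fun p : G × G => p.1 * p.2, continuous_mul⟩).curry g)
                + ((f'.comp ⟨fun p : G × G => p.1 * p.2, continuous_mul⟩).curry g) := by
            ext h; simp
          rw [ContinuousMap.add_apply, convAux_apply, convAux_apply, convAux_apply, hc, map_add]
        rw [h, map_add]
      map_smul' := fun c f => by
        show μ (convAux ν (c • f)) = (RingHom.id ℂ) c • μ (convAux ν f)
        have h : convAux ν (c • f) = c • convAux ν f := by
          ext g
          have hc : (((c • f).comp ⟨fun p : G × G => p.1 * p.2, continuous_mul⟩).curry g)
              = c • ((f.comp ⟨fun p : G × G => p.1 * p.2, continuous_mul⟩).curry g) := by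
            ext h; simp
          rw [ContinuousMap.smul_apply, convAux_apply, convAux_apply, hc, _root_.map_smul]
        rw [h, _root_.map_smul, RingHom.id_apply] }
    (‖μ‖ * ‖ν‖) (fun f => by
      simp only [LinearMap.coe_mk, AddHom.coe_mk]
      calc ‖μ (convAux ν f)‖ ≤ ‖μ‖ * ‖convAux ν f‖ := μ.le_opNorm _
      _ ≤ ‖μ‖ * (‖ν‖ * ‖f‖) :=
          mul_le_mul_of_nonneg_left (norm_convAux_le ν f) (norm_nonneg μ)
      _ = ‖μ‖ * ‖ν‖ * ‖f‖ := by ring)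

lemma convCLM_apply (μ ν : C(G,ℂ) →L[ℂ] ℂ) (f : C(G,ℂ)) :
    convCLM μ ν f = μ (convAux ν f) := rfl

lemma norm_convCLM_le (μ ν : C(G,ℂ) →L[ℂ] ℂ) : ‖convCLM μ ν‖ ≤ ‖μ‖ * ‖ν‖ :=
  LinearMap.mkContinuous_norm_le _ (mul_nonneg (norm_nonneg μ) (norm_nonneg ν)) _

lemma fourierL_convCLM (μ ν : C(G,ℂ) →L[ℂ] ℂ) (ρ : Irrep G) :
    fourierL (convCLM μ ν) ρ = fourierL μ ρ * fourierL ν ρ := by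
  classical
  ext j k
  rw [Matrix.mul_apply]
  show convCLM μ ν (entryCM ρ j k) = _
  rw [convCLM_apply]
  have hstep : convAux ν (entryCM ρ j k)
      = ∑ l, (fourierL ν ρ l k) • entryCM ρ j l := by
    ext g
    rw [convAux_apply]
    have hcur : ((entryCM ρ j k).comp ⟨fun p : G × G => p.1 * p.2, continuous_mul⟩).curry g
        = ∑ l, (star (ρ.mat g j l)) • entryCM ρ l k := by
      ext h
      simp only [ContinuousMap.coe_sum, Finset.sum_apply, ContinuousMap.coe_smul, Pi.smul_apply,
        smul_eq_mul]
      show star (ρ.mat (g * h) j k) = _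
      rw [ρ.mat_mul g h, Matrix.mul_apply]
      rw [star_sum]
      refine Finset.sum_congr rfl fun l _ => ?_
      show star (ρ.mat g j l * ρ.mat h l k) = _
      rw [star_mul']
      rfl
    rw [hcur, map_sum]
    simp only [ContinuousMap.coe_sum, Finset.sum_apply, ContinuousMap.coe_smul, Pi.smul_apply,
      smul_eq_mul, _root_.map_smul]
    refine Finset.sum_congr rfl fun l _ => ?_
    rw [← fourierL_apply]
    show star (ρ.mat g j l) * fourierL ν ρ l k = fourierL ν ρ l k * (entryCM ρ j l) g
    rw [mul_comm]; rfl
  rw [hstep, map_sum]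
  simp only [_root_.map_smul, smul_eq_mul]
  refine Finset.sum_congr rfl fun l _ => ?_
  rw [← fourierL_apply, mul_comm]

lemma trace_mul_stdBasis {d : ℕ} (M : Matrix (Fin d) (Fin d) ℂ) (k j : Fin d) :
    (M * Matrix.single k j 1).trace = M j k := by
  classical
  simp only [Matrix.trace, Matrix.diag, Matrix.mul_apply, Matrix.single,
    Matrix.of_apply, mul_ite, mul_one, mul_zero]
  rw [Finset.sum_eq_single j]
  · rw [Finset.sum_eq_single k]
    · simp
    · intro x1 _ hx1; simp [(Ne.symm hx1 : k ≠ x1)]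
    · intro h; exact absurd (Finset.mem_univ k) h
  · intro x _ hx
    apply Finset.sum_eq_zero; intro x1 _; simp [(Ne.symm hx : j ≠ x)]
  · intro h; exact absurd (Finset.mem_univ j) h

lemma stdBasis_mul_trace {d : ℕ} (M : Matrix (Fin d) (Fin d) ℂ) (k j : Fin d) :
    (Matrix.single k j 1 * M).trace = M j k := by
  classical
  simp only [Matrix.trace, Matrix.diag, Matrix.mul_apply, Matrix.single,
    Matrix.of_apply, ite_mul, one_mul, zero_mul]
  rw [Finset.sum_eq_single k]
  · rw [Finset.sum_eq_single j]
    · simp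
    · intro x1 _ hx1; simp [(Ne.symm hx1 : j ≠ x1)]
    · intro h; exact absurd (Finset.mem_univ j) h
  · intro x _ hx
    apply Finset.sum_eq_zero; intro x1 _; simp [(Ne.symm hx : k ≠ x)]
  · intro h; exact absurd (Finset.mem_univ k) h

/-- The continuous map `g ↦ ρ(g)_{jk}` (no conjugate). -/
def entryCM' (ρ : Irrep G) (j k : Fin ρ.d) : C(G, ℂ) :=
  ⟨fun g => ρ.mat g j k, ρ.continuous_mat.matrix_elem j k⟩

lemma star_entryCM' (ρ : Irrep G) (j k : Fin ρ.d) :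
    star (entryCM ρ j k) = entryCM' ρ j k := by
  ext g; simp [entryCM, entryCM', ContinuousMap.star_apply]

/-- The basic linear map sending a matrix `a` to the trigonometric polynomial
`g ↦ d_i tr(π_i(g) a)`. -/
def trigPoly {ι : Type} (π : ι → Irrep G) (i : ι) :
    Matrix (Fin ((π i).d)) (Fin ((π i).d)) ℂ →ₗ[ℂ] C(G, ℂ) where
  toFun a := ⟨fun g => ((π i).d : ℂ) * ((π i).mat g * a).trace,
    continuous_const.mul (((π i).continuous_mat.matrix_mul continuous_const).matrix_trace)⟩
  map_add' a a' := by
    ext g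
    simp [Matrix.mul_add, Matrix.trace_add, mul_add]
  map_smul' c a := by
    ext g
    simp [Matrix.mul_smul, Matrix.trace_smul, smul_eq_mul]
    ring

lemma exists_interpolating_functional {ι : Type} (π : ι → Irrep G) (C : ℝ) (hS : Sidon π C)
    (b : ∀ i, Matrix (Fin ((π i).d)) (Fin ((π i).d)) ℂ)
    (hb : ∀ i, opNorm (b i) ≤ 1) :
    ∃ ψ : C(G,ℂ) →L[ℂ] ℂ, ‖ψ‖ ≤ max C 0 ∧
      ∀ (i : ι) (j k : Fin ((π i).d)), ψ (entryCM' (π i) j k) = b i j k := by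
  classical
  set L : (Π₀ i, Matrix (Fin ((π i).d)) (Fin ((π i).d)) ℂ) →ₗ[ℂ] C(G, ℂ) :=
    DFinsupp.lsum ℕ (trigPoly π) with hL_def
  set φ : (Π₀ i, Matrix (Fin ((π i).d)) (Fin ((π i).d)) ℂ) →ₗ[ℂ] ℂ :=
    DFinsupp.lsum ℕ (fun i =>
      { toFun := fun a => ((π i).d : ℂ) * (a * b i).trace
        map_add' := fun a a' => by simp [Matrix.add_mul, Matrix.trace_add, mul_add]
        map_smul' := fun c a => by
          simp [Matrix.smul_mul, Matrix.trace_smul, smul_eq_mul]; ring }) with hφ_def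
  have hkey : ∀ p, ‖φ p‖ ≤ max C 0 * ‖L p‖ := by
    intro p
    have hφp : φ p = ∑ i ∈ p.support, ((π i).d : ℂ) * ((p i) * b i).trace := by
      rw [hφ_def]
      simp [DFinsupp.lsum_apply_apply, DFinsupp.sumAddHom_apply, DFinsupp.sum]
    have hLp : ∀ g, L p g = ∑ i ∈ p.support, ((π i).d : ℂ) * ((π i).mat g * p i).trace := by
      intro g
      rw [hL_def]
      simp [DFinsupp.lsum_apply_apply, DFinsupp.sumAddHom_apply, DFinsupp.sum, trigPoly]
    have step1 : ‖φ p‖ ≤ ∑ i ∈ p.support, ((π i).d : ℝ) * traceAbs (p i) := by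
      rw [hφp]
      refine (norm_sum_le _ _).trans (Finset.sum_le_sum fun i _ => ?_)
      rw [norm_mul]
      have h1 : ‖(((π i).d : ℕ) : ℂ)‖ = ((π i).d : ℝ) := by
        simp
      rw [h1]
      refine mul_le_mul_of_nonneg_left ?_ (by positivity)
      exact norm_trace_mul_le (p i) (b i) (by rw [← opNorm_eq_l2]; exact hb i)
    have step2 := hS p.support (fun i => p i)
    have step3 : (⨆ g : G, ‖∑ i ∈ p.support, ((π i).d : ℂ) *
        Matrix.trace ((π i).mat g * p i)‖) = ‖L p‖ := by
      rw [ContinuousMap.norm_eq_iSup_norm]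
      exact iSup_congr fun g => by rw [hLp g]
    have step4 : C * ‖L p‖ ≤ max C 0 * ‖L p‖ :=
      mul_le_mul_of_nonneg_right (le_max_left _ _) (norm_nonneg _)
    calc ‖φ p‖ ≤ ∑ i ∈ p.support, ((π i).d : ℝ) * traceAbs (p i) := step1
    _ ≤ C * ⨆ g : G, ‖∑ i ∈ p.support, ((π i).d : ℂ) *
          Matrix.trace ((π i).mat g * p i)‖ := step2
    _ = C * ‖L p‖ := by rw [step3]
    _ ≤ max C 0 * ‖L p‖ := step4
  have hker : LinearMap.ker L ≤ LinearMap.ker φ := by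
    intro p hp
    rw [LinearMap.mem_ker] at hp ⊢
    have := hkey p
    rw [hp, norm_zero, mul_zero] at this
    exact norm_le_zero_iff.mp this
  set φX : LinearMap.range L →ₗ[ℂ] ℂ :=
    (Submodule.liftQ (LinearMap.ker L) φ hker).comp
      ((LinearMap.quotKerEquivRange L).symm : LinearMap.range L →ₗ[ℂ] _) with hφX_def
  have hφX_eval : ∀ (p) (h : L p ∈ LinearMap.range L), φX ⟨L p, h⟩ = φ p := by
    intro p h
    rw [hφX_def]
    simp only [LinearMap.coe_comp, Function.comp_apply, LinearEquiv.coe_coe]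
    rw [LinearMap.quotKerEquivRange_symm_apply_image L p h]
    exact Submodule.liftQ_apply _ φ p
  have hφX_bound : ∀ x : LinearMap.range L, ‖φX x‖ ≤ max C 0 * ‖x‖ := by
    rintro ⟨x, p, rfl⟩
    rw [hφX_eval p ⟨p, rfl⟩]
    exact hkey p
  set φXc : LinearMap.range L →L[ℂ] ℂ := LinearMap.mkContinuous φX (max C 0) hφX_bound
    with hφXc_def
  obtain ⟨ψ, hψ_ext, hψ_norm⟩ := exists_extension_norm_eq (LinearMap.range L) φXc
  refine ⟨ψ, ?_, ?_⟩
  · rw [hψ_norm]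
    exact LinearMap.mkContinuous_norm_le _ (le_max_right C 0) _
  · intro i j k
    have hd : (((π i).d : ℕ) : ℂ) ≠ 0 := Nat.cast_ne_zero.mpr j.pos.ne'
    set a₀ : Matrix (Fin ((π i).d)) (Fin ((π i).d)) ℂ :=
      ((((π i).d : ℂ))⁻¹) • Matrix.single k j (1:ℂ) with ha₀
    have hLs : L (DFinsupp.single i a₀) = entryCM' (π i) j k := by
      rw [hL_def, DFinsupp.lsum_single]
      ext g
      show ((π i).d : ℂ) * ((π i).mat g * a₀).trace = (π i).mat g j k
      rw [ha₀, Matrix.mul_smul, Matrix.trace_smul, smul_eq_mul, trace_mul_stdBasis,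
        ← mul_assoc, mul_inv_cancel₀ hd, one_mul]
    have hφs : φ (DFinsupp.single i a₀) = b i j k := by
      rw [hφ_def, DFinsupp.lsum_single]
      show ((π i).d : ℂ) * (a₀ * b i).trace = b i j k
      rw [ha₀, Matrix.smul_mul, Matrix.trace_smul, smul_eq_mul, stdBasis_mul_trace,
        ← mul_assoc, mul_inv_cancel₀ hd, one_mul]
    have hmem : entryCM' (π i) j k ∈ LinearMap.range L := ⟨DFinsupp.single i a₀, hLs⟩
    have := hψ_ext ⟨entryCM' (π i) j k, hmem⟩
    rw [this]
    have : (⟨entryCM' (π i) j k, hmem⟩ : LinearMap.range L)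
        = ⟨L (DFinsupp.single i a₀), ⟨DFinsupp.single i a₀, rfl⟩⟩ := by
      exact Subtype.ext hLs.symm
    rw [this]
    show φX _ = _
    exact (hφX_eval _ _).trans hφs

end FunctionalLayer

/-- A Sidon set which is an `ε`-peak set (for some `0 < ε < 1`) is peaking: for every
`0 < ε' < 1` there is a constant `w'` (depending only on `C`, `w`, `ε`, `ε'`) such that for
every choice of unitaries `u = (u_π)` there is a complex Radon measure `μ` (encoded as a
continuous linear functional on `C(G,ℂ)`) with total variation norm at most `w'`,
`μ̂(π) = u_π` on `Λ`, and `‖μ̂(ρ)‖ ≤ ε'` for every irrep `ρ` not equivalent to a member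
of `Λ`. -/
theorem sidon_peak_implies_peaking :
    ∀ (C w ε ε' : ℝ), 0 < ε → ε < 1 → 0 ≤ w → 0 < ε' → ε' < 1 →
    ∃ w' : ℝ,
      ∀ (G : Type) [Group G] [TopologicalSpace G] [IsTopologicalGroup G] [CompactSpace G]
        [T2Space G]
        (ι : Type) (π : ι → Irrep G), PairwiseInequiv π → Sidon π C →
        (∃ ν : C(G, ℂ) →L[ℂ] ℂ, ‖ν‖ ≤ w ∧
          (∀ i, fourierL ν (π i) = (1 : Matrix (Fin ((π i).d)) (Fin ((π i).d)) ℂ)) ∧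
          ∀ ρ : Irrep G, (¬ ∃ i, ρ.Equiv (π i)) → opNorm (fourierL ν ρ) ≤ ε) →
        ∀ u : ∀ i, Matrix.unitaryGroup (Fin ((π i).d)) ℂ,
          ∃ μ : C(G, ℂ) →L[ℂ] ℂ, ‖μ‖ ≤ w' ∧
            (∀ i, fourierL μ (π i) = (u i : Matrix (Fin ((π i).d)) (Fin ((π i).d)) ℂ)) ∧
            ∀ ρ : Irrep G, (¬ ∃ i, ρ.Equiv (π i)) → opNorm (fourierL μ ρ) ≤ ε' := by
  intro C w ε ε' hε hε1 hw hε' hε'1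
  set B := max C 1 with hB_def
  have hB1 : (1:ℝ) ≤ B := le_max_right _ _
  have hB0 : (0:ℝ) < B := lt_of_lt_of_le one_pos hB1
  have hC0B : max C 0 ≤ B := max_le_max (le_refl C) zero_le_one
  obtain ⟨k, hk⟩ := exists_pow_lt_of_lt_one (div_pos hε' hB0) hε1
  refine ⟨B * (max w 1) ^ k, ?_⟩
  intro G _ _ _ _ _ ι π hPI hSidon hpeak u
  obtain ⟨ν, hνn, hνI, hνsmall⟩ := hpeak
  set b : ∀ i, Matrix (Fin ((π i).d)) (Fin ((π i).d)) ℂ :=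
    fun i => ((u i : Matrix (Fin ((π i).d)) (Fin ((π i).d)) ℂ)).map (starRingEnd ℂ) with hb_def
  have hb : ∀ i, opNorm (b i) ≤ 1 := fun i =>
    opNorm_unitary_le (map_star_mem_unitary (u i).2)
  obtain ⟨ψ, hψn, hψev⟩ := exists_interpolating_functional π C hSidon b hb
  set μ₀ := conjCLM ψ with hμ₀_def
  have hμ₀n : ‖μ₀‖ ≤ max C 0 := (norm_conjCLM_le ψ).trans hψn
  have hμ₀ev : ∀ i, fourierL μ₀ (π i)
      = (u i : Matrix (Fin ((π i).d)) (Fin ((π i).d)) ℂ) := by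
    intro i
    ext j k
    rw [fourierL_apply, hμ₀_def, conjCLM_apply, star_entryCM', hψev i j k, hb_def]
    simp [Matrix.map_apply]
  set m : ℕ → (C(G,ℂ) →L[ℂ] ℂ) :=
    fun n => Nat.rec (motive := fun _ => C(G,ℂ) →L[ℂ] ℂ) μ₀
      (fun _ prev => convCLM prev ν) n with hm_def
  have hm0 : m 0 = μ₀ := rfl
  have hmsucc : ∀ n, m (n+1) = convCLM (m n) ν := fun n => rfl
  have hw1 : ‖ν‖ ≤ max w 1 := hνn.trans (le_max_left _ _)
  have hmw1 : (0:ℝ) ≤ max w 1 := le_trans hw (le_max_left _ _)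
  have hmn : ∀ n, ‖m n‖ ≤ max C 0 * (max w 1) ^ n := by
    intro n
    induction n with
    | zero => rw [pow_zero, mul_one]; exact hμ₀n
    | succ n ih =>
      rw [hmsucc n, pow_succ, ← mul_assoc]
      refine (norm_convCLM_le (m n) ν).trans ?_
      exact mul_le_mul ih hw1 (norm_nonneg ν)
        (mul_nonneg (le_max_right C 0) (pow_nonneg hmw1 n))
  have hmev : ∀ n i, fourierL (m n) (π i)
      = (u i : Matrix (Fin ((π i).d)) (Fin ((π i).d)) ℂ) := by
    intro n i
    induction n with
    | zero => rw [hm0]; exact hμ₀ev i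
    | succ n ih =>
      rw [hmsucc n, fourierL_convCLM, ih, hνI i, mul_one]
  have hmsmall : ∀ n (ρ : Irrep G), (¬ ∃ i, ρ.Equiv (π i)) →
      opNorm (fourierL (m n) ρ) ≤ max C 0 * ε ^ n := by
    intro n ρ hρ
    induction n with
    | zero => rw [hm0]; simpa using (opNorm_fourierL_le μ₀ ρ).trans hμ₀n
    | succ n ih =>
      rw [hmsucc n, fourierL_convCLM, pow_succ, ← mul_assoc]
      refine (opNorm_mul_le _ _).trans ?_
      exact mul_le_mul ih (hνsmall ρ hρ) (opNorm_nonneg _)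
        (mul_nonneg (le_max_right C 0) (pow_nonneg hε.le n))
  refine ⟨m k, ?_, fun i => hmev k i, fun ρ hρ => ?_⟩
  · refine (hmn k).trans ?_
    exact mul_le_mul_of_nonneg_right hC0B (pow_nonneg hmw1 k)
  · refine (hmsmall k ρ hρ).trans ?_
    have h1 : max C 0 * ε ^ k ≤ B * ε ^ k :=
      mul_le_mul_of_nonneg_right hC0B (pow_nonneg hε.le k)
    have h2 : B * ε ^ k ≤ B * (ε' / B) :=
      mul_le_mul_of_nonneg_left hk.le hB0.le
    have h3 : B * (ε' / B) = ε' := by field_simp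
    linarith


end
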